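/- Satisfiability-preserving reduction of Bernays–Schönfinkel clauses to range-restricted Bernays–Schönfinkel clauses: if M is a set of BS clauses (without equality), then rr(M) is a range-restricted set of BS clauses, and M is satisfiable if and only if rr(M) is satisfiable; moreover the size of rr(M) is bounded by a linear function in the size of M. -/

import Mathlib

namespace BUMG

/-- First-order terms over function symbols `F`, with variables indexed by `ℕ`. -/
inductive Term (F : Type) : Type where
  | var : ℕ → Term F
  | app : F → List (Term F) → Term F

namespace Term
variable {F : Type}

/-- The list of variables occurring in a term. -/
def vars : Term F → List ℕ
  | var n => [n]
  | app _ ts => ts.attach.flatMap (fun t => vars t.1)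
decreasing_by simp_wf; have := List.sizeOf_lt_of_mem t.2; omega

/-- The function symbols (with the arity of the occurrence) occurring in a term. -/
def funcs : Term F → List (F × ℕ)
  | var _ => []
  | app f ts => (f, ts.length) :: ts.attach.flatMap (fun t => funcs t.1)
decreasing_by simp_wf; have := List.sizeOf_lt_of_mem t.2; omega

/-- Applying a substitution to a term. -/
def subst (g : ℕ → Term F) : Term F → Term F
  | var n => g n
  | app f ts => app f (ts.attach.map (fun t => subst g t.1))
decreasing_by simp_wf; have := List.sizeOf_lt_of_mem t.2; omega

/-- The number of occurrences of symbols (variables and function symbols) in a term. -/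
def size : Term F → ℕ
  | var _ => 1
  | app _ ts => 1 + (ts.attach.map (fun t => size t.1)).sum
decreasing_by simp_wf; have := List.sizeOf_lt_of_mem t.2; omega

/-- A term is ground iff it contains no variables. -/
def IsGround (t : Term F) : Prop := t.vars = []

def isVar : Term F → Bool
  | var _ => true
  | app _ _ => false

/-- A proper functional term is a term that is neither a variable nor a constant. -/
def isPF : Term F → Bool
  | app _ (_ :: _) => true
  | _ => false

/-- The subterm relation. -/
inductive Subterm : Term F → Term F → Prop
  | refl (t : Term F) : Subterm t t
  | app {s t : Term F} {f : F} {ts : List (Term F)} :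
      t ∈ ts → Subterm s t → Subterm s (app f ts)

end Term

/-- Atoms over predicate symbols `P` and function symbols `F`. -/
structure Atom (P F : Type) where
  pred : P
  args : List (Term F)

namespace Atom
variable {P F : Type}

def subst (g : ℕ → Term F) (a : Atom P F) : Atom P F := ⟨a.pred, a.args.map (Term.subst g)⟩
def vars (a : Atom P F) : List ℕ := a.args.flatMap Term.vars
def IsGround (a : Atom P F) : Prop := a.vars = []
def funcs (a : Atom P F) : List (F × ℕ) := a.args.flatMap Term.funcs
/-- Whether the atom contains a proper functional term. -/
def hasPF (a : Atom P F) : Bool := a.args.any Term.isPF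
def size (a : Atom P F) : ℕ := 1 + (a.args.map Term.size).sum

end Atom

/-- A clause `H₁ ∨ ... ∨ Hₘ ← B₁ ∧ ... ∧ Bₖ` with head atoms `heads`
and body atoms `body`. -/
structure Clause (P F : Type) where
  heads : List (Atom P F)
  body : List (Atom P F)

namespace Clause
variable {P F : Type}

def atoms (C : Clause P F) : List (Atom P F) := C.heads ++ C.body
def vars (C : Clause P F) : List ℕ := C.atoms.flatMap Atom.vars
def bodyVars (C : Clause P F) : List ℕ := C.body.flatMap Atom.vars
def headVars (C : Clause P F) : List ℕ := C.heads.flatMap Atom.vars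
def maxVar (C : Clause P F) : ℕ := C.vars.foldr max 0
def subst (g : ℕ → Term F) (C : Clause P F) : Clause P F :=
  ⟨C.heads.map (Atom.subst g), C.body.map (Atom.subst g)⟩
/-- The predicate symbols (with the arity of the occurrence) occurring in a clause. -/
def preds (C : Clause P F) : List (P × ℕ) := C.atoms.map (fun a => (a.pred, a.args.length))
/-- The function symbols (with the arity of the occurrence) occurring in a clause. -/
def funcs (C : Clause P F) : List (F × ℕ) := C.atoms.flatMap Atom.funcs
/-- The number of occurrences of symbols in a clause. -/
def size (C : Clause P F) : ℕ := (C.atoms.map Atom.size).sum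

/-- A clause is range-restricted iff every variable occurring in it occurs in its body. -/
def RangeRestricted (C : Clause P F) : Prop := ∀ v ∈ C.vars, v ∈ C.bodyVars

/-- A Bernays–Schönfinkel clause: every functional term occurring in it is a constant. -/
def BS (C : Clause P F) : Prop := ∀ fn ∈ C.funcs, fn.2 = 0

end Clause

/-- A clause set is range-restricted iff all its clauses are. -/
def RangeRestrictedSet {P F : Type} (M : Set (Clause P F)) : Prop :=
  ∀ C ∈ M, C.RangeRestricted

/-- The predicate symbols (with arities) occurring in a clause set. -/
def predsOf {P F : Type} (M : Set (Clause P F)) : Set (P × ℕ) :=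
  { pn | ∃ C ∈ M, pn ∈ C.preds }

/-- The function symbols (with arities) occurring in a clause set. -/
def funcsOf {P F : Type} (M : Set (Clause P F)) : Set (F × ℕ) :=
  { fn | ∃ C ∈ M, fn ∈ C.funcs }

/-- A signature: a set of predicate symbols with arities and
a set of function symbols with arities. -/
structure Sig (P F : Type) where
  preds : Set (P × ℕ)
  funcs : Set (F × ℕ)

/-- The clause set `M` is well-formed over the signature `σ`: all symbols occurring in `M`
belong to `σ` (with matching arities). -/
def WFSet {P F : Type} (σ : Sig P F) (M : Set (Clause P F)) : Prop :=
  ∀ C ∈ M, (∀ pn ∈ C.preds, pn ∈ σ.preds) ∧ (∀ fn ∈ C.funcs, fn ∈ σ.funcs)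

/-- The total number of occurrences of symbols in a clause set. -/
noncomputable def setSize {P F : Type} (M : Set (Clause P F)) : ℕ :=
  ∑ᶠ C ∈ M, C.size

/-! ### Herbrand semantics -/

/-- A substitution is ground iff it maps every variable to a ground term. -/
def GroundSubst {F : Type} (g : ℕ → Term F) : Prop := ∀ n, (g n).IsGround

/-- A (Herbrand) interpretation `I` (a set of ground atoms) satisfies a clause iff
it satisfies every ground instance of it. -/
def satClause {P F : Type} (I : Set (Atom P F)) (C : Clause P F) : Prop :=
  ∀ g : ℕ → Term F, GroundSubst g →
    (∀ a ∈ C.body, a.subst g ∈ I) → ∃ a ∈ C.heads, a.subst g ∈ I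

/-- A clause set is satisfiable iff some Herbrand interpretation (a set of ground atoms)
satisfies every ground instance of every clause of it. -/
def Satisfiable {P F : Type} (M : Set (Clause P F)) : Prop :=
  ∃ I : Set (Atom P F), (∀ a ∈ I, a.IsGround) ∧ ∀ C ∈ M, satClause I C

/-! ### Equality axioms and E-satisfiability -/

/-- The equality atom `s ≈ t` (`eqP` being the distinguished equality predicate `≈`). -/
def eqAtom {P F : Type} (eqP : P) (s t : Term F) : Atom P F := ⟨eqP, [s, t]⟩

def rangeVars {F : Type} (n : ℕ) : List (Term F) := (List.range n).map Term.var

def xsList {F : Type} (n : ℕ) : List (Term F) := (List.range n).map (fun i => Term.var (2*i))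
def ysList {F : Type} (n : ℕ) : List (Term F) := (List.range n).map (fun i => Term.var (2*i+1))
def eqConjList {P F : Type} (eqP : P) (n : ℕ) : List (Atom P F) :=
  (List.range n).map (fun i => eqAtom eqP (Term.var (2*i)) (Term.var (2*i+1)))

/-- The equality axioms `EAX`: `≈` is reflexive, symmetric, transitive and compatible with
the given function and predicate symbols. -/
def EAX {P F : Type} (eqP : P) (Ps : Set (P × ℕ)) (Fs : Set (F × ℕ)) : Set (Clause P F) :=
  { ⟨[eqAtom eqP (Term.var 0) (Term.var 0)], []⟩,
    ⟨[eqAtom eqP (Term.var 1) (Term.var 0)], [eqAtom eqP (Term.var 0) (Term.var 1)]⟩,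
    ⟨[eqAtom eqP (Term.var 0) (Term.var 2)],
      [eqAtom eqP (Term.var 0) (Term.var 1), eqAtom eqP (Term.var 1) (Term.var 2)]⟩ } ∪
  { D | ∃ fn ∈ Fs,
      D = ⟨[eqAtom eqP (Term.app fn.1 (xsList fn.2)) (Term.app fn.1 (ysList fn.2))],
           eqConjList eqP fn.2⟩ } ∪
  { D | ∃ pn ∈ Ps,
      D = ⟨[⟨pn.1, ysList pn.2⟩], ⟨pn.1, xsList pn.2⟩ :: eqConjList eqP pn.2⟩ }

/-- A clause set `M` is E-satisfiable iff `M` together with the equality axioms for the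
symbols occurring in `M` is satisfiable. -/
def ESatisfiable {P F : Type} (eqP : P) (M : Set (Clause P F)) : Prop :=
  Satisfiable (M ∪ EAX eqP (predsOf M) (funcsOf M))

/-! ### Range-restricting transformations -/

/-- The atom `dom(t)`. -/
def domAtom {P F : Type} (domP : P) (t : Term F) : Atom P F := ⟨domP, [t]⟩

/-- The term `c` for a constant `c`. -/
def cTerm {F : Type} (c : F) : Term F := Term.app c []

/-- The clause `dom(c) ← ⊤`. -/
def domcClause {P F : Type} (domP : P) (c : F) : Clause P F :=
  ⟨[domAtom domP (cTerm c)], []⟩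

/-- Range-restricting a clause (Step (2) of `crr`, Step (3) of `rr`):
`H ← B` becomes `H ← B ∧ dom(x₁) ∧ ... ∧ dom(xₖ)` where `x₁,...,xₖ` are the variables
occurring in the head but not in the body. -/
def rangeRestrictClause {P F : Type} (domP : P) (C : Clause P F) : Clause P F :=
  ⟨C.heads, C.body ++
    ((C.headVars.filter (fun v => v ∉ C.bodyVars)).dedup).map
      (fun v => domAtom domP (Term.var v))⟩

/-- The argument list of the term abstraction of an atom: argument positions holding
non-variable terms are replaced by fresh variables. -/
def abstrArgs {F : Type} (base : ℕ) (ts : List (Term F)) : List (Term F) :=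
  ts.mapIdx (fun i t => if t.isVar then t else Term.var (base + i))

/-- Step (2) of the `rr` transformation: for each clause `H ← B` of `M`, each body atom
`P(t₁,...,tₙ)` of `B` with term abstraction `P(s₁,...,sₙ)` and abstraction substitution `α`,
the clauses `dom(xᵢ)α ← P(s₁,...,sₙ)` for every `xᵢ` in the domain of `α`. -/
def step2Set {P F : Type} (domP : P) (M : Set (Clause P F)) : Set (Clause P F) :=
  { D | ∃ C ∈ M, ∃ a ∈ C.body, ∃ i : Fin a.args.length,
        (a.args.get i).isVar = false ∧
        D = ⟨[domAtom domP (a.args.get i)],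
             [⟨a.pred, abstrArgs (C.maxVar + 1) a.args⟩]⟩ }

/-- Step (4) of the `rr` transformation: the clauses `dom(xᵢ) ← P(x₁,...,xₙ)` for every
`n`-ary predicate symbol `P` of the signature and every `1 ≤ i ≤ n`. -/
def step4Set {P F : Type} (domP : P) (Ps : Set (P × ℕ)) : Set (Clause P F) :=
  { D | ∃ pn ∈ Ps, ∃ i, i < pn.2 ∧
        D = ⟨[domAtom domP (Term.var i)], [⟨pn.1, rangeVars pn.2⟩]⟩ }

/-- Step (5) of the `rr` transformation: the clauses `dom(xᵢ) ← dom(f(x₁,...,xₙ))` for every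
`n`-ary function symbol `f` of the signature and every `1 ≤ i ≤ n`. -/
def step5Set {P F : Type} (domP : P) (Fs : Set (F × ℕ)) : Set (Clause P F) :=
  { D | ∃ fn ∈ Fs, ∃ i, i < fn.2 ∧
        D = ⟨[domAtom domP (Term.var i)],
             [domAtom domP (Term.app fn.1 (rangeVars fn.2))]⟩ }

/-- The new range-restricting transformation `rr` (over the signature `σ`, with fresh unary
predicate symbol `dom` and constant `c`): the clauses of `M`, the clause `dom(c) ← ⊤` and
the Step-(2) clauses, all range-restricted by Step (3), together with the Step-(4) and
Step-(5) clauses. -/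
def rr {P F : Type} [DecidableEq P] [DecidableEq F] (σ : Sig P F) (domP : P) (c : F)
    (M : Set (Clause P F)) : Set (Clause P F) :=
  (rangeRestrictClause domP '' (M ∪ {domcClause domP c} ∪ step2Set domP M))
  ∪ step4Set domP σ.preds ∪ step5Set domP σ.funcs

/-- Step (3) of the classical transformation `crr`: the clauses
`dom(f(x₁,...,xₙ)) ← dom(x₁) ∧ ... ∧ dom(xₙ)` enumerating the Herbrand universe. -/
def crrStep3 {P F : Type} (domP : P) (Fs : Set (F × ℕ)) : Set (Clause P F) :=
  { D | ∃ fn ∈ Fs,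
        D = ⟨[domAtom domP (Term.app fn.1 (rangeVars fn.2))],
             (List.range fn.2).map (fun i => domAtom domP (Term.var i))⟩ }

/-- The classical range-restricting transformation `crr`. -/
def crr {P F : Type} [DecidableEq P] [DecidableEq F] (σ : Sig P F) (domP : P) (c : F)
    (M : Set (Clause P F)) : Set (Clause P F) :=
  (rangeRestrictClause domP '' (M ∪ {domcClause domP c})) ∪ crrStep3 domP σ.funcs

/-! ### Shifting -/

/-- Partial flattening of the arguments of a non-equational body atom: top-level proper
functional terms are replaced by fresh variables. The `j`-th body atom uses the fresh
variables `base + Nat.pair j i`. -/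
def pfArgs {P F : Type} [DecidableEq P] (eqP : P) (base j : ℕ) (a : Atom P F) : Atom P F :=
  if a.pred = eqP then a
  else ⟨a.pred, a.args.mapIdx (fun i t => if t.isPF then Term.var (base + Nat.pair j i) else t)⟩

/-- The equations `tᵢ ≈ xᵢ` introduced by partially flattening a body atom. -/
def pfEqs {P F : Type} [DecidableEq P] (eqP : P) (base j : ℕ) (a : Atom P F) :
    List (Atom P F) :=
  if a.pred = eqP then []
  else (a.args.mapIdx (fun i t => (i, t))).filterMap
        (fun p => if p.2.isPF then
            some (eqAtom eqP p.2 (Term.var (base + Nat.pair j p.1))) else none)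

/-- Partial flattening of a clause. -/
def pfClause {P F : Type} [DecidableEq P] (eqP : P) (C : Clause P F) : Clause P F :=
  ⟨C.heads,
   C.body.mapIdx (fun j a => pfArgs eqP (C.maxVar + 1) j a) ++
   (C.body.mapIdx (fun j a => pfEqs eqP (C.maxVar + 1) j a)).flatten⟩

/-- The reflexivity unit clause `x ≈ x ← ⊤`. -/
def reflClause {P F : Type} (eqP : P) : Clause P F :=
  ⟨[eqAtom eqP (Term.var 0) (Term.var 0)], []⟩

/-- The partial flattening transformation `pf`. -/
def pf {P F : Type} [DecidableEq P] (eqP : P) (M : Set (Clause P F)) : Set (Clause P F) :=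
  pfClause eqP '' M ∪ {reflClause eqP}

/-- The atom `P̄(t₁,...,tₙ)` for the atom `P(t₁,...,tₙ)`, where `bar` maps each predicate
symbol `P` to the fresh predicate symbol `P̄` uniquely associated with it. -/
def barAtom {P F : Type} (bar : P → P) (a : Atom P F) : Atom P F := ⟨bar a.pred, a.args⟩

/-- Basic shifting of a clause: the body atoms containing a proper functional term are
moved, negated (via `bar`), into the head. -/
def bsClause {P F : Type} (bar : P → P) (C : Clause P F) : Clause P F :=
  ⟨C.heads ++ (C.body.filter (fun a => a.hasPF)).map (barAtom bar),
   C.body.filter (fun a => !a.hasPF)⟩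

/-- The predicate symbols (with arities) of shifted atoms of `M`. -/
def shiftedPreds {P F : Type} (M : Set (Clause P F)) : Set (P × ℕ) :=
  { pn | ∃ C ∈ M, ∃ a ∈ C.body, a.hasPF = true ∧ pn = (a.pred, a.args.length) }

/-- The basic shifting transformation `bs`: shift deep body atoms and add the shifted atom
consistency clauses `⊥ ← P(x₁,...,xₙ) ∧ P̄(x₁,...,xₙ)`. -/
def bs {P F : Type} (bar : P → P) (M : Set (Clause P F)) : Set (Clause P F) :=
  bsClause bar '' M ∪
  { D | ∃ pn ∈ shiftedPreds M,
        D = ⟨[], [⟨pn.1, rangeVars pn.2⟩, ⟨bar pn.1, rangeVars pn.2⟩]⟩ }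

/-- The shifting transformation: `sh(M) = bs(pf(M))`. -/
def sh {P F : Type} [DecidableEq P] (eqP : P) (bar : P → P) (M : Set (Clause P F)) :
    Set (Clause P F) :=
  bs bar (pf eqP M)

/-! ### Blocking -/

/-- The head `x ≈ y ∨ x ≉ y` of the blocking clauses. -/
def blockSplitHead {P F : Type} (eqP neqP : P) : List (Atom P F) :=
  [eqAtom eqP (Term.var 0) (Term.var 1), eqAtom neqP (Term.var 0) (Term.var 1)]

/-- The clause `⊥ ← x ≈ y ∧ x ≉ y`. -/
def eqNeqBot {P F : Type} (eqP neqP : P) : Clause P F :=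
  ⟨[], [eqAtom eqP (Term.var 0) (Term.var 1), eqAtom neqP (Term.var 0) (Term.var 1)]⟩

/-- The unrestricted domain blocking transformation `blud`. -/
def blud {P F : Type} (domP eqP neqP : P) (M : Set (Clause P F)) : Set (Clause P F) :=
  M ∪ { ⟨blockSplitHead eqP neqP, [domAtom domP (Term.var 0), domAtom domP (Term.var 1)]⟩,
        eqNeqBot eqP neqP }

/-- The atom `sub(s,t)`. -/
def subAtom {P F : Type} (subP : P) (s t : Term F) : Atom P F := ⟨subP, [s, t]⟩

/-- The axioms describing the subterm relationship: `sub(x,x) ← dom(x)` and, for every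
`n`-ary function symbol `f` of the signature and `1 ≤ i ≤ n`,
`sub(x, f(x₁,...,xₙ)) ← sub(x,xᵢ) ∧ dom(x) ∧ dom(f(x₁,...,xₙ))`. -/
def subClauses {P F : Type} (domP subP : P) (Fs : Set (F × ℕ)) : Set (Clause P F) :=
  { ⟨[subAtom subP (Term.var 0) (Term.var 0)], [domAtom domP (Term.var 0)]⟩ } ∪
  { D | ∃ fn ∈ Fs, ∃ i, i < fn.2 ∧
        D = ⟨[subAtom subP (Term.var fn.2) (Term.app fn.1 (rangeVars fn.2))],
             [subAtom subP (Term.var fn.2) (Term.var i),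
              domAtom domP (Term.var fn.2),
              domAtom domP (Term.app fn.1 (rangeVars fn.2))]⟩ }

/-- The subterm domain blocking transformation `blsd`. -/
def blsd {P F : Type} (σ : Sig P F) (domP eqP neqP subP : P) (M : Set (Clause P F)) :
    Set (Clause P F) :=
  M ∪ subClauses domP subP σ.funcs ∪
  { ⟨blockSplitHead eqP neqP, [subAtom subP (Term.var 0) (Term.var 1)]⟩,
    eqNeqBot eqP neqP }

/-- The subterm predicate blocking transformation `blsp`. -/
def blsp {P F : Type} (σ : Sig P F) (domP eqP neqP subP : P) (M : Set (Clause P F)) :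
    Set (Clause P F) :=
  M ∪ subClauses domP subP σ.funcs ∪
  { D | ∃ p : P, (p, 1) ∈ σ.preds ∧
        D = ⟨blockSplitHead eqP neqP,
             [subAtom subP (Term.var 0) (Term.var 1),
              ⟨p, [Term.var 0]⟩, ⟨p, [Term.var 1]⟩]⟩ } ∪
  { eqNeqBot eqP neqP }

/-- The unrestricted predicate blocking transformation `blup`. -/
def blup {P F : Type} (σ : Sig P F) (domP eqP neqP : P) (M : Set (Clause P F)) :
    Set (Clause P F) :=
  M ∪ { D | ∃ p : P, (p, 1) ∈ σ.preds ∧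
        D = ⟨blockSplitHead eqP neqP, [⟨p, [Term.var 0]⟩, ⟨p, [Term.var 1]⟩]⟩ } ∪
  { eqNeqBot eqP neqP }

/-! ### Combined transformations -/

/-- The base transformations `rr`, `sh∘rr`, `crr`, `sh∘crr`
(composition read left-to-right, so `(sh∘rr)(M) = rr(sh(M))`). -/
inductive BaseTr | rr | shrr | crr | shcrr

/-- The optional blocking transformations. -/
inductive BlockTr | id | blsd | blsp | blud | blup

def applyBase {P F : Type} [DecidableEq P] [DecidableEq F] (σ : Sig P F) (domP : P) (c : F)
    (eqP : P) (bar : P → P) : BaseTr → Set (Clause P F) → Set (Clause P F)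
  | .rr, M => rr σ domP c M
  | .shrr, M => rr σ domP c (sh eqP bar M)
  | .crr, M => crr σ domP c M
  | .shcrr, M => crr σ domP c (sh eqP bar M)

def applyBlock {P F : Type} (σ : Sig P F) (domP eqP neqP subP : P) :
    BlockTr → Set (Clause P F) → Set (Clause P F)
  | .id, M => M
  | .blsd, M => blsd σ domP eqP neqP subP M
  | .blsp, M => blsp σ domP eqP neqP subP M
  | .blud, M => blud domP eqP neqP M
  | .blup, M => blup σ domP eqP neqP M

/-- A combined transformation: a base transformation optionally followed by a blocking
transformation (composition read left-to-right). -/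
def applyTr {P F : Type} [DecidableEq P] [DecidableEq F] (σ : Sig P F) (domP : P) (c : F)
    (eqP neqP subP : P) (bar : P → P) (b : BaseTr) (τ : BlockTr) (M : Set (Clause P F)) :
    Set (Clause P F) :=
  applyBlock σ domP eqP neqP subP τ (applyBase σ domP c eqP bar b M)

/-- The clause `x ≈ x ← dom(x)`. -/
def reflDomClause {P F : Type} (domP eqP : P) : Clause P F :=
  ⟨[eqAtom eqP (Term.var 0) (Term.var 0)], [domAtom domP (Term.var 0)]⟩

end BUMG

namespace BUMG

/-!
Range restriction only adds `dom` atoms to bodies and clauses with a `dom` atom in the head, so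
a model of `M` extended by `dom(t)` for every ground term `t` is a model of `rr(M)`.

Conversely, let `I` be a model of `rr(M)`, collapse every ground term `t` with `dom(t) ∉ I` to
the constant `c` (which is in `dom` by Step 1), and pull `I` back along this collapse. In a BS
clause the only non-variable arguments are constants, and `I` puts them into `dom`: for a body
atom by the Step-2 clause of that constant, instantiated so that its body becomes the collapsed
body atom, and for the derived head atom by the Step-4 clauses. So the collapse fixes these
constants and commutes with ground instantiation, which turns the Step-3 clause of `C ∈ M`,
instantiated by the collapsed substitution, into the required instance of `C`.

Step 3 at most triples the size of a clause, and a clause `C` contributes at most `|C|` Step-2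
clauses, each of size three plus an arity; Step 5 is empty since all function symbols are
constants. Hence the size bound is linear for a fixed finite signature.
-/

namespace Term
variable {F : Type}

@[simp] lemma vars_var (n : ℕ) : (var n : Term F).vars = [n] := by simp [vars]

@[simp] lemma vars_app (f : F) (ts : List (Term F)) : (app f ts).vars = ts.flatMap vars := by
  simp [vars]

@[simp] lemma subst_var (g : ℕ → Term F) (n : ℕ) : (var n).subst g = g n := by simp [subst]

@[simp] lemma subst_app (g : ℕ → Term F) (f : F) (ts : List (Term F)) :
    (app f ts).subst g = app f (ts.map (subst g)) := by simp [subst]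

@[simp] lemma funcs_var (n : ℕ) : (var n : Term F).funcs = [] := by simp [funcs]

@[simp] lemma funcs_app (f : F) (ts : List (Term F)) :
    (app f ts).funcs = (f, ts.length) :: ts.flatMap funcs := by simp [funcs]

@[simp] lemma size_var (n : ℕ) : (var n : Term F).size = 1 := by simp [size]

@[simp] lemma size_app (f : F) (ts : List (Term F)) :
    (app f ts).size = 1 + (ts.map size).sum := by simp [size]

@[simp] lemma isVar_var (n : ℕ) : (var n : Term F).isVar = true := rfl

@[simp] lemma isVar_app (f : F) (ts : List (Term F)) : (app f ts).isVar = false := rfl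

theorem isGround_subst {g : ℕ → Term F} (hg : GroundSubst g) : ∀ t : Term F, (t.subst g).IsGround
  | var n => by simpa using hg n
  | app f ts => by
    simp only [IsGround, subst_app, vars_app, List.flatMap_eq_nil_iff, List.mem_map]
    rintro _ ⟨t, ht, rfl⟩
    exact isGround_subst hg t

theorem length_vars_le_size : ∀ t : Term F, t.vars.length ≤ t.size
  | var n => by simp
  | app f ts => by
    simp only [vars_app, size_app, List.length_flatMap]
    have : (ts.map fun t => t.vars.length).sum ≤ (ts.map size).sum :=
      List.sum_le_sum fun t _ => length_vars_le_size t
    omega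

lemma one_le_size : ∀ t : Term F, 1 ≤ t.size
  | var _ => by simp
  | app _ _ => by simp

end Term

lemma isGround_cTerm {F : Type} (c : F) : (cTerm c).IsGround := by simp [cTerm, Term.IsGround]

lemma rangeVars_flatMap_vars {F : Type} (n : ℕ) :
    (rangeVars n : List (Term F)).flatMap Term.vars = List.range n := by
  simp [rangeVars, List.flatMap_map]

lemma rangeVars_map_subst_getD {F : Type} (ts : List (Term F)) (d : Term F) :
    (rangeVars ts.length).map (Term.subst fun n => ts.getD n d) = ts := by
  apply List.ext_getElem <;> simp +contextual [rangeVars]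

namespace Atom
variable {P F : Type}

@[simp] lemma subst_pred (g : ℕ → Term F) (a : Atom P F) : (a.subst g).pred = a.pred := rfl

@[simp] lemma subst_args (g : ℕ → Term F) (a : Atom P F) :
    (a.subst g).args = a.args.map (Term.subst g) := rfl

lemma isGround_iff {a : Atom P F} : a.IsGround ↔ ∀ t ∈ a.args, t.IsGround := by
  simp [IsGround, vars, Term.IsGround]

lemma isGround_subst {g : ℕ → Term F} (hg : GroundSubst g) (a : Atom P F) :
    (a.subst g).IsGround := by
  simp [isGround_iff, Term.isGround_subst hg]

lemma subst_comp {a : Atom P F} {h : Term F → Term F} (g : ℕ → Term F)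
    (hfix : ∀ t ∈ a.args, (∃ n, t = .var n) ∨ ∃ f, t = .app f [] ∧ h t = t) :
    a.subst (h ∘ g) = ⟨a.pred, a.args.map (h ∘ Term.subst g)⟩ := by
  simp only [Atom.subst, Atom.mk.injEq, true_and]
  refine List.map_congr_left fun t ht => ?_
  obtain ⟨n, rfl⟩ | ⟨f, rfl, hf⟩ := hfix t ht <;> simp [*]

lemma length_vars_le_size (a : Atom P F) : a.vars.length ≤ a.size := by
  have : (a.args.map fun t => t.vars.length).sum ≤ (a.args.map Term.size).sum :=
    List.sum_le_sum fun t _ => t.length_vars_le_size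
  simp only [vars, size, List.length_flatMap]
  omega

lemma length_args_le_size (a : Atom P F) : a.args.length ≤ a.size := by
  have : (a.args.map fun _ => 1).sum ≤ (a.args.map Term.size).sum :=
    List.sum_le_sum fun t _ => t.one_le_size
  simp only [size, List.map_const', List.sum_replicate, smul_eq_mul, mul_one] at this ⊢
  omega

end Atom

section DomAtom
variable {P F : Type}

@[simp] lemma domAtom_subst (domP : P) (g : ℕ → Term F) (t : Term F) :
    (domAtom domP t).subst g = domAtom domP (t.subst g) := rfl

@[simp] lemma vars_domAtom (domP : P) (t : Term F) : (domAtom domP t).vars = t.vars := by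
  simp [domAtom, Atom.vars]

@[simp] lemma funcs_domAtom (domP : P) (t : Term F) : (domAtom domP t).funcs = t.funcs := by
  simp [domAtom, Atom.funcs]

@[simp] lemma size_domAtom (domP : P) (t : Term F) : (domAtom domP t).size = 1 + t.size := by
  simp [domAtom, Atom.size]

end DomAtom

namespace Clause
variable {P F : Type}

lemma vars_eq (C : Clause P F) : C.vars = C.headVars ++ C.bodyVars := by
  simp [vars, headVars, bodyVars, atoms]

lemma size_eq (C : Clause P F) :
    C.size = (C.heads.map Atom.size).sum + (C.body.map Atom.size).sum := by
  simp [size, atoms]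

lemma rangeRestricted_of_subset {C : Clause P F} (h : C.headVars ⊆ C.bodyVars) :
    C.RangeRestricted := by
  intro v hv
  rw [vars_eq, List.mem_append] at hv
  exact hv.elim (@h v) id

lemma lt_maxVar_succ {C : Clause P F} {a : Atom P F} (ha : a ∈ C.atoms) {n : ℕ}
    (hn : .var n ∈ a.args) : n < C.maxVar + 1 := by
  have : n ∈ C.vars := by
    simp only [vars, Atom.vars, List.mem_flatMap]
    exact ⟨a, ha, _, hn, by simp⟩
  exact Nat.lt_succ_of_le (List.le_max_of_le' 0 this le_rfl)

lemma BS.eq_var_or_eq_const {C : Clause P F} (hC : C.BS) {a : Atom P F} (ha : a ∈ C.atoms)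
    {t : Term F} (ht : t ∈ a.args) : (∃ n, t = .var n) ∨ ∃ f, t = .app f [] := by
  cases t with
  | var n => exact .inl ⟨n, rfl⟩
  | app f ts =>
    have : (f, ts.length) ∈ C.funcs := by
      simp only [funcs, Atom.funcs, List.mem_flatMap]
      exact ⟨a, ha, _, ht, by simp⟩
    exact .inr ⟨f, by simpa using hC _ this⟩

lemma BS.eq_const {C : Clause P F} (hC : C.BS) {a : Atom P F} (ha : a ∈ C.atoms)
    {t : Term F} (ht : t ∈ a.args) (hv : t.isVar = false) : ∃ f, t = .app f [] := by
  obtain ⟨n, rfl⟩ | h := hC.eq_var_or_eq_const ha ht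
  · simp at hv
  · exact h

end Clause

section WellFormed
variable {P F : Type} {σ : Sig P F} {M : Set (Clause P F)}

lemma WFSet.BS (hM : WFSet σ M) (hσ : ∀ fn ∈ σ.funcs, fn.2 = 0) : ∀ C ∈ M, C.BS :=
  fun C hC fn hfn => hσ fn ((hM C hC).2 fn hfn)

lemma WFSet.mem_preds (hM : WFSet σ M) {C : Clause P F} (hC : C ∈ M) {a : Atom P F}
    (ha : a ∈ C.atoms) : (a.pred, a.args.length) ∈ σ.preds :=
  (hM C hC).1 _ (List.mem_map_of_mem ha)

end WellFormed

section RangeRestrictClause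
variable {P F : Type} (domP : P)

@[simp] lemma heads_rangeRestrictClause (C : Clause P F) :
    (rangeRestrictClause domP C).heads = C.heads := rfl

lemma bodyVars_rangeRestrictClause (C : Clause P F) :
    (rangeRestrictClause domP C).bodyVars =
      C.bodyVars ++ (C.headVars.filter (· ∉ C.bodyVars)).dedup := by
  simp [rangeRestrictClause, Clause.bodyVars, List.flatMap_map]

lemma rangeRestrictClause_rangeRestricted (C : Clause P F) :
    (rangeRestrictClause domP C).RangeRestricted := by
  refine Clause.rangeRestricted_of_subset fun v (hv : v ∈ C.headVars) => ?_
  rw [bodyVars_rangeRestrictClause]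
  by_cases hb : v ∈ C.bodyVars
  · exact List.mem_append_left _ hb
  · exact List.mem_append_right _ (by simpa [hb] using hv)

lemma funcs_rangeRestrictClause (C : Clause P F) :
    (rangeRestrictClause domP C).funcs = C.funcs := by
  simp only [rangeRestrictClause, Clause.funcs, Clause.atoms, List.flatMap_append]
  simp [List.flatMap_map, domAtom, Atom.funcs]

lemma rangeRestrictClause_BS {C : Clause P F} (h : C.BS) : (rangeRestrictClause domP C).BS :=
  fun fn hfn => h fn (funcs_rangeRestrictClause domP C ▸ hfn)

lemma rangeRestrictClause_of_headVars_eq_nil {C : Clause P F} (h : C.headVars = []) :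
    rangeRestrictClause domP C = C := by
  simp [rangeRestrictClause, h]

lemma size_rangeRestrictClause (C : Clause P F) :
    (rangeRestrictClause domP C).size =
      C.size + 2 * ((C.headVars.filter (· ∉ C.bodyVars)).dedup).length := by
  simp [rangeRestrictClause, Clause.size_eq, Function.comp_def]
  ring

lemma size_rangeRestrictClause_le (C : Clause P F) :
    (rangeRestrictClause domP C).size ≤ 3 * C.size := by
  have hdom : ((C.headVars.filter (· ∉ C.bodyVars)).dedup).length ≤ C.headVars.length :=
    (List.dedup_sublist _).length_le.trans (List.length_filter_le _ _)
  have hheads : C.headVars.length ≤ (C.heads.map Atom.size).sum := by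
    simp only [Clause.headVars, List.length_flatMap]
    exact List.sum_le_sum fun a _ => a.length_vars_le_size
  rw [size_rangeRestrictClause, C.size_eq]
  omega

end RangeRestrictClause

section Abstraction
variable {F : Type}

/-- The abstraction substitution `α` of the paper: the fresh variable `base + i` is mapped back
to the `i`-th argument. -/
def abstrSubst (base : ℕ) (ts : List (Term F)) (n : ℕ) : Term F :=
  if n < base then .var n else ts.getD (n - base) (.var n)

lemma exists_eq_var_of_mem_abstrArgs {base : ℕ} {ts : List (Term F)} {s : Term F}
    (hs : s ∈ abstrArgs base ts) : ∃ n, s = .var n := by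
  simp only [abstrArgs, List.mem_mapIdx] at hs
  obtain ⟨i, hi, rfl⟩ := hs
  split_ifs with hv
  · cases h : ts[i] with
    | var n => exact ⟨n, rfl⟩
    | app => simp [h] at hv
  · exact ⟨_, rfl⟩

lemma abstrArgs_map_subst_abstrSubst {base : ℕ} {ts : List (Term F)}
    (hts : ∀ n, .var n ∈ ts → n < base) :
    (abstrArgs base ts).map (Term.subst (abstrSubst base ts)) = ts := by
  apply List.ext_getElem (by simp [abstrArgs])
  intro i h1 h2
  simp only [abstrArgs, List.getElem_map, List.getElem_mapIdx]
  split_ifs with hv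
  · cases h : ts[i] with
    | var n => simp [abstrSubst, hts n (h ▸ List.getElem_mem h2)]
    | app => simp [h] at hv
  · simp [abstrSubst, h2]

lemma abstrArgs_map_subst_comp {base : ℕ} {ts : List (Term F)}
    (hts : ∀ n, .var n ∈ ts → n < base) (φ : Term F → Term F) :
    (abstrArgs base ts).map (Term.subst (φ ∘ abstrSubst base ts)) = ts.map φ := by
  conv_rhs => rw [← abstrArgs_map_subst_abstrSubst hts, List.map_map]
  refine List.map_congr_left fun s hs => ?_
  obtain ⟨n, rfl⟩ := exists_eq_var_of_mem_abstrArgs hs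
  simp

end Abstraction

section AbstractionClauses
variable {P F : Type} (domP : P)

def abstractionClauses (C : Clause P F) : List (Clause P F) :=
  C.body.flatMap fun a => (a.args.filter fun t => !t.isVar).map fun t =>
    ⟨[domAtom domP t], [⟨a.pred, abstrArgs (C.maxVar + 1) a.args⟩]⟩

variable {domP}

lemma mem_abstractionClauses {C D : Clause P F} :
    D ∈ abstractionClauses domP C ↔ ∃ a ∈ C.body, ∃ t ∈ a.args, t.isVar = false ∧
      D = ⟨[domAtom domP t], [⟨a.pred, abstrArgs (C.maxVar + 1) a.args⟩]⟩ := by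
  simp only [abstractionClauses, List.mem_flatMap, List.mem_map, List.mem_filter,
    Bool.not_eq_true']
  aesop

lemma step2Set_eq_biUnion (M : Set (Clause P F)) :
    step2Set domP M = ⋃ C ∈ M, {D | D ∈ abstractionClauses domP C} := by
  ext D
  simp only [step2Set, Set.mem_iUnion, mem_abstractionClauses, exists_prop]
  constructor
  · rintro ⟨C, hC, a, ha, i, hv, rfl⟩
    exact ⟨C, hC, a, ha, _, List.get_mem _ _, hv, rfl⟩
  · rintro ⟨C, hC, a, ha, t, ht, hv, rfl⟩
    obtain ⟨i, rfl⟩ := List.get_of_mem ht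
    exact ⟨C, hC, a, ha, i, hv, rfl⟩

lemma mem_step2Set {M : Set (Clause P F)} {D : Clause P F} :
    D ∈ step2Set domP M ↔ ∃ C ∈ M, D ∈ abstractionClauses domP C := by
  simp [step2Set_eq_biUnion]

lemma length_abstractionClauses_le (C : Clause P F) :
    (abstractionClauses domP C).length ≤ C.size := by
  have : (C.body.map fun a => (a.args.filter fun t => !t.isVar).length).sum
      ≤ (C.body.map Atom.size).sum :=
    List.sum_le_sum fun a _ => (List.length_filter_le _ _).trans a.length_args_le_size
  simp only [abstractionClauses, List.length_flatMap, List.length_map, C.size_eq]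
  omega

variable {C D : Clause P F} (hC : C.BS)
include hC

lemma headVars_eq_nil_of_mem_abstractionClauses (hD : D ∈ abstractionClauses domP C) :
    D.headVars = [] := by
  obtain ⟨a, ha, t, ht, hv, rfl⟩ := mem_abstractionClauses.1 hD
  obtain ⟨f, rfl⟩ := hC.eq_const (List.mem_append_right _ ha) ht hv
  simp [Clause.headVars]

lemma BS_of_mem_abstractionClauses (hD : D ∈ abstractionClauses domP C) : D.BS := by
  obtain ⟨a, ha, t, ht, hv, rfl⟩ := mem_abstractionClauses.1 hD
  obtain ⟨f, rfl⟩ := hC.eq_const (List.mem_append_right _ ha) ht hv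
  intro fn hfn
  simp only [Clause.funcs, Clause.atoms, Atom.funcs, List.mem_flatMap] at hfn
  obtain ⟨b, hb, s, hs, hfs⟩ := hfn
  simp only [List.cons_append, List.nil_append, List.mem_cons, List.not_mem_nil, or_false] at hb
  rcases hb with rfl | rfl
  · simp_all [domAtom]
  · obtain ⟨n, rfl⟩ := exists_eq_var_of_mem_abstrArgs hs
    simp at hfs

lemma size_le_of_mem_abstractionClauses {A : ℕ} (hA : ∀ a ∈ C.atoms, a.args.length ≤ A)
    (hD : D ∈ abstractionClauses domP C) : D.size ≤ 3 + A := by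
  obtain ⟨a, ha, t, ht, hv, rfl⟩ := mem_abstractionClauses.1 hD
  obtain ⟨f, rfl⟩ := hC.eq_const (List.mem_append_right _ ha) ht hv
  have hone : ∀ s ∈ abstrArgs (C.maxVar + 1) a.args, s.size = 1 := fun s hs => by
    obtain ⟨n, rfl⟩ := exists_eq_var_of_mem_abstrArgs hs
    simp
  have hvars : ((abstrArgs (C.maxVar + 1) a.args).map Term.size).sum = a.args.length := by
    rw [List.map_congr_left hone]
    simp [abstrArgs]
  have := hA a (List.mem_append_right _ ha)
  simp [Clause.size_eq, Atom.size, domAtom, hvars]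
  omega

end AbstractionClauses

lemma step5Set_eq_empty {P F : Type} (domP : P) {Fs : Set (F × ℕ)} (h : ∀ fn ∈ Fs, fn.2 = 0) :
    step5Set domP Fs = (∅ : Set (Clause P F)) := by
  refine Set.eq_empty_of_forall_notMem ?_
  rintro D ⟨fn, hfn, i, hi, -⟩
  rw [h fn hfn] at hi
  exact Nat.not_lt_zero i hi

section rrStructure
variable {P F : Type} [DecidableEq P] [DecidableEq F] {σ : Sig P F} {domP : P} {c : F}
  {M : Set (Clause P F)}

lemma rr_eq_of_BS (hσ : ∀ fn ∈ σ.funcs, fn.2 = 0) :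
    rr σ domP c M = rangeRestrictClause domP '' (M ∪ {domcClause domP c} ∪ step2Set domP M)
      ∪ step4Set domP σ.preds := by
  rw [rr, step5Set_eq_empty domP hσ, Set.union_empty]

lemma rangeRestrictClause_mem_rr {C : Clause P F} (hC : C ∈ M) :
    rangeRestrictClause domP C ∈ rr σ domP c M :=
  .inl (.inl ⟨C, .inl (.inl hC), rfl⟩)

lemma domcClause_mem_rr : domcClause domP c ∈ rr σ domP c M := by
  have : rangeRestrictClause domP (domcClause domP c) = domcClause domP c :=
    rangeRestrictClause_of_headVars_eq_nil domP (by simp [domcClause, Clause.headVars, cTerm])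
  exact this ▸ .inl (.inl ⟨_, .inl (.inr rfl), rfl⟩)

lemma mem_rr_of_mem_abstractionClauses {C D : Clause P F} (hC : C ∈ M) (hBS : C.BS)
    (hD : D ∈ abstractionClauses domP C) : D ∈ rr σ domP c M := by
  rw [← rangeRestrictClause_of_headVars_eq_nil domP
    (headVars_eq_nil_of_mem_abstractionClauses hBS hD)]
  exact .inl (.inl ⟨D, .inr (mem_step2Set.2 ⟨C, hC, hD⟩), rfl⟩)

lemma step4Clause_mem_rr {p : P} {n i : ℕ} (hp : (p, n) ∈ σ.preds) (hi : i < n) :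
    ⟨[domAtom domP (.var i)], [⟨p, rangeVars n⟩]⟩ ∈ rr σ domP c M :=
  .inl (.inr ⟨(p, n), hp, i, hi, rfl⟩)

lemma mem_rr_cases {D : Clause P F} (hD : D ∈ rr σ domP c M) :
    (∃ C ∈ M, D = rangeRestrictClause domP C) ∨ ∃ t, domAtom domP t ∈ D.heads := by
  rcases hD with (⟨C, (hC | rfl) | hC, rfl⟩ | ⟨pn, -, i, -, rfl⟩) | ⟨fn, -, i, -, rfl⟩
  · exact .inl ⟨C, hC, rfl⟩
  · exact .inr ⟨cTerm c, by simp [domcClause]⟩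
  · obtain ⟨C', -, hC⟩ := mem_step2Set.1 hC
    obtain ⟨a, -, t, -, -, rfl⟩ := mem_abstractionClauses.1 hC
    exact .inr ⟨t, by simp⟩
  all_goals exact .inr ⟨.var i, by simp⟩

end rrStructure

section Properties
variable {P F : Type} [DecidableEq P] [DecidableEq F] {σ : Sig P F} {domP : P} {c : F}
  {M : Set (Clause P F)}

theorem rangeRestrictedSet_rr : RangeRestrictedSet (rr σ domP c M) := by
  rintro D ((⟨C, -, rfl⟩ | ⟨pn, -, i, hi, rfl⟩) | ⟨fn, -, i, hi, rfl⟩)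
  · exact rangeRestrictClause_rangeRestricted domP C
  all_goals
    refine Clause.rangeRestricted_of_subset ?_
    simp [Clause.headVars, Clause.bodyVars, Atom.vars, domAtom, rangeVars_flatMap_vars, hi]

theorem BS_of_mem_rr (hσ : ∀ fn ∈ σ.funcs, fn.2 = 0) (hM : ∀ C ∈ M, C.BS) :
    ∀ D ∈ rr σ domP c M, D.BS := by
  rw [rr_eq_of_BS hσ]
  rintro D (⟨C, hC, rfl⟩ | ⟨pn, -, i, -, rfl⟩)
  · refine rangeRestrictClause_BS domP ?_
    rcases hC with (hC | rfl) | hC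
    · exact hM C hC
    · simp [Clause.BS, domcClause, Clause.funcs, Clause.atoms, cTerm]
    · obtain ⟨C', hC', hC⟩ := mem_step2Set.1 hC
      exact BS_of_mem_abstractionClauses (hM C' hC') hC
  · simp [Clause.BS, Clause.funcs, Clause.atoms, Atom.funcs, domAtom, rangeVars, List.flatMap_map]

theorem satisfiable_rr_of_satisfiable (hfresh : ∀ C ∈ M, ∀ a ∈ C.body, a.pred ≠ domP)
    (hM : Satisfiable M) : Satisfiable (rr σ domP c M) := by
  obtain ⟨I, hIg, hI⟩ := hM
  refine ⟨I ∪ {A | ∃ t : Term F, t.IsGround ∧ A = domAtom domP t}, ?_, fun D hD g hg hbody => ?_⟩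
  · rintro A (hA | ⟨t, ht, rfl⟩)
    · exact hIg A hA
    · simpa [Atom.isGround_iff, domAtom] using ht
  obtain ⟨C, hC, rfl⟩ | ⟨t, ht⟩ := mem_rr_cases hD
  · have hbodyI : ∀ a ∈ C.body, a.subst g ∈ I := fun a ha =>
      (hbody a (List.mem_append_left _ ha)).resolve_right fun ⟨_, _, hdom⟩ =>
        hfresh C hC a ha (congrArg Atom.pred hdom)
    obtain ⟨a, ha, haI⟩ := hI C hC g hg hbodyI
    exact ⟨a, ha, .inl haI⟩
  · exact ⟨_, ht, .inr ⟨_, t.isGround_subst hg, rfl⟩⟩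

end Properties

section Collapse
variable {P F : Type} (domP : P) (c : F) (I : Set (Atom P F))

open scoped Classical in
noncomputable def collapse (t : Term F) : Term F :=
  if domAtom domP t ∈ I then t else cTerm c

variable {domP c I}

lemma collapse_of_mem {t : Term F} (ht : domAtom domP t ∈ I) : collapse domP c I t = t :=
  if_pos ht

lemma isGround_collapse {t : Term F} (ht : t.IsGround) : (collapse domP c I t).IsGround := by
  unfold collapse
  split_ifs
  exacts [ht, isGround_cTerm c]

variable [DecidableEq P] [DecidableEq F] {σ : Sig P F} {M : Set (Clause P F)}
  (hI : ∀ D ∈ rr σ domP c M, satClause I D)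
include hI

lemma domAtom_cTerm_mem : domAtom domP (cTerm c) ∈ I := by
  obtain ⟨a, ha, haI⟩ := hI _ domcClause_mem_rr (fun _ => cTerm c)
    (fun _ => isGround_cTerm c) (by simp [domcClause])
  simp only [domcClause, List.mem_singleton] at ha
  subst ha
  simpa [cTerm] using haI

lemma domAtom_collapse_mem (t : Term F) : domAtom domP (collapse domP c I t) ∈ I := by
  unfold collapse
  split_ifs with ht
  exacts [ht, domAtom_cTerm_mem hI]

lemma domAtom_mem_of_mem_args (hIg : ∀ A ∈ I, A.IsGround) {p : P} {ts : List (Term F)}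
    (hA : ⟨p, ts⟩ ∈ I) (hp : (p, ts.length) ∈ σ.preds) {t : Term F} (ht : t ∈ ts) :
    domAtom domP t ∈ I := by
  obtain ⟨i, hi, rfl⟩ := List.getElem_of_mem ht
  have hts : ∀ s ∈ ts, s.IsGround := Atom.isGround_iff.1 (hIg _ hA)
  have hg : GroundSubst fun n => ts.getD n (cTerm c) := fun n => by
    by_cases hn : n < ts.length
    · simpa [hn] using hts _ (List.getElem_mem hn)
    · simpa [hn] using isGround_cTerm c
  obtain ⟨a, ha, haI⟩ := hI _ (step4Clause_mem_rr hp hi) _ hg (by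
    simp only [List.mem_singleton, forall_eq, Atom.subst, rangeVars_map_subst_getD]
    exact hA)
  simp only [List.mem_singleton] at ha
  subst ha
  simpa [hi] using haI

lemma domAtom_mem_of_mem_abstraction {C : Clause P F} (hC : C ∈ M) (hBS : C.BS)
    {a : Atom P F} (ha : a ∈ C.body) {t : Term F} (ht : t ∈ a.args) (hv : t.isVar = false)
    {φ : Term F → Term F} (hφ : ∀ s, (φ s).IsGround) (hφI : ⟨a.pred, a.args.map φ⟩ ∈ I) :
    domAtom domP t ∈ I := by
  obtain ⟨f, rfl⟩ := hBS.eq_const (List.mem_append_right _ ha) ht hv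
  have hD := mem_rr_of_mem_abstractionClauses (σ := σ) (c := c) hC hBS
    (mem_abstractionClauses (domP := domP).2 ⟨a, ha, _, ht, hv, rfl⟩)
  have hvars : ∀ n, .var n ∈ a.args → n < C.maxVar + 1 := fun n hn =>
    C.lt_maxVar_succ (List.mem_append_right _ ha) hn
  obtain ⟨b, hb, hbI⟩ := hI _ hD (φ ∘ abstrSubst (C.maxVar + 1) a.args) (fun n => hφ _) (by
    simpa [Atom.subst, abstrArgs_map_subst_comp hvars] using hφI)
  simp only [List.mem_singleton] at hb
  subst hb
  simpa using hbI

end Collapse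

theorem satisfiable_of_satisfiable_rr {P F : Type} [DecidableEq P] [DecidableEq F]
    {σ : Sig P F} {domP : P} {c : F} {M : Set (Clause P F)} (hWF : WFSet σ M)
    (hσ : ∀ fn ∈ σ.funcs, fn.2 = 0) (hrr : Satisfiable (rr σ domP c M)) : Satisfiable M := by
  obtain ⟨I, hIg, hI⟩ := hrr
  have hBS := hWF.BS hσ
  set h := collapse domP c I
  refine ⟨{A | A.IsGround ∧ ⟨A.pred, A.args.map h⟩ ∈ I}, fun A hA => hA.1,
    fun C hC g hg hbody => ?_⟩
  have hhg : ∀ s : Term F, (h (s.subst g)).IsGround := fun s =>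
    isGround_collapse (s.isGround_subst hg)
  have hcomm : ∀ a ∈ C.atoms, (∀ t ∈ a.args, t.isVar = false → domAtom domP t ∈ I) →
      a.subst (h ∘ g) = ⟨a.pred, a.args.map (h ∘ Term.subst g)⟩ := fun a ha hdom =>
    Atom.subst_comp g fun t ht => ((hBS C hC).eq_var_or_eq_const ha ht).imp_right
      fun ⟨f, hf⟩ => ⟨f, hf, collapse_of_mem (hdom t ht (by simp [hf]))⟩
  have hbodyI : ∀ a ∈ C.body, ⟨a.pred, a.args.map (h ∘ Term.subst g)⟩ ∈ I := fun a ha => by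
    simpa [List.map_map] using (hbody a ha).2
  obtain ⟨a, ha, haI⟩ := hI _ (rangeRestrictClause_mem_rr hC) (h ∘ g)
    (fun n => isGround_collapse (hg n)) (by
      intro b hb
      simp only [rangeRestrictClause, List.mem_append, List.mem_map] at hb
      rcases hb with hb | ⟨v, -, rfl⟩
      · rw [hcomm b (List.mem_append_right _ hb) fun t ht hv =>
          domAtom_mem_of_mem_abstraction hI hC (hBS C hC) hb ht hv hhg (hbodyI b hb)]
        exact hbodyI b hb
      · simpa using domAtom_collapse_mem hI (g v))
  refine ⟨a, ha, Atom.isGround_subst hg a, ?_⟩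
  have ha' := List.mem_append_left C.body ha
  rw [hcomm a ha' fun t ht hv => ?_] at haI
  · simpa [List.map_map] using haI
  · obtain ⟨f, rfl⟩ := (hBS C hC).eq_const ha' ht hv
    exact domAtom_mem_of_mem_args hI hIg haI (by simpa using hWF.mem_preds hC ha')
      (List.mem_map.2 ⟨_, ht, by simp⟩)

section SetSize
variable {P F : Type} {S T : Set (Clause P F)}

lemma setSize_union_le (hS : S.Finite) (hT : T.Finite) :
    setSize (S ∪ T) ≤ setSize S + setSize T := by
  unfold setSize
  rw [← finsum_mem_union_inter hS hT]
  exact Nat.le_add_right _ _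

lemma setSize_singleton (C : Clause P F) : setSize {C} = C.size :=
  finsum_mem_singleton

lemma setSize_insert {C : Clause P F} (hC : C ∉ S) (hS : S.Finite) :
    setSize (insert C S) = C.size + setSize S :=
  finsum_mem_insert _ hC hS

lemma setSize_biUnion_le_mul {T : Clause P F → Set (Clause P F)} {k : ℕ} (hS : S.Finite)
    (hT : ∀ C ∈ S, (T C).Finite) (hk : ∀ C ∈ S, setSize (T C) ≤ k * C.size) :
    setSize (⋃ C ∈ S, T C) ≤ k * setSize S := by
  induction S, hS using Set.Finite.induction_on with
  | empty => simp [setSize]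
  | @insert C S hC hS ih =>
    rw [Set.biUnion_insert, setSize_insert hC hS, mul_add]
    have hT' : ∀ D ∈ S, (T D).Finite := fun D hD => hT D (.inr hD)
    calc setSize (T C ∪ ⋃ D ∈ S, T D) ≤ setSize (T C) + setSize (⋃ D ∈ S, T D) :=
          setSize_union_le (hT C (.inl rfl)) (hS.biUnion hT')
      _ ≤ k * C.size + k * setSize S :=
          add_le_add (hk C (.inl rfl)) (ih hT' fun D hD => hk D (.inr hD))

lemma setSize_image_le_mul {f : Clause P F → Clause P F} {k : ℕ} (hS : S.Finite)
    (hf : ∀ C ∈ S, (f C).size ≤ k * C.size) : setSize (f '' S) ≤ k * setSize S := by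
  rw [Set.image_eq_iUnion]
  exact setSize_biUnion_le_mul hS (fun _ _ => Set.finite_singleton _)
    fun C hC => (setSize_singleton _).trans_le (hf C hC)

lemma setSize_setOf_mem_le {k : ℕ} (l : List (Clause P F)) (hl : ∀ D ∈ l, D.size ≤ k) :
    setSize {D | D ∈ l} ≤ l.length * k := by
  induction l with
  | nil => simp [setSize]
  | cons D l ih =>
    have hcons : {E | E ∈ D :: l} = {D} ∪ {E | E ∈ l} := by ext; simp
    rw [hcons, List.length_cons, add_one_mul, add_comm]
    calc setSize ({D} ∪ {E | E ∈ l}) ≤ setSize {D} + setSize {E | E ∈ l} :=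
          setSize_union_le (Set.finite_singleton _) l.finite_toSet
      _ ≤ k + l.length * k :=
          add_le_add ((setSize_singleton D).trans_le (hl D List.mem_cons_self))
            (ih fun E hE => hl E (List.mem_cons_of_mem _ hE))

end SetSize

section Size
variable {P F : Type} {domP : P} {M : Set (Clause P F)}

lemma step2Set_finite (hM : M.Finite) : (step2Set domP M).Finite := by
  rw [step2Set_eq_biUnion]
  exact hM.biUnion fun C _ => List.finite_toSet _

lemma step4Set_finite {Ps : Set (P × ℕ)} (hPs : Ps.Finite) :
    (step4Set domP Ps : Set (Clause P F)).Finite := by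
  refine (hPs.biUnion fun pn _ => (Set.finite_Iio pn.2).image
    fun i => (⟨[domAtom domP (.var i)], [⟨pn.1, rangeVars pn.2⟩]⟩ : Clause P F)).subset ?_
  rintro D ⟨pn, hpn, i, hi, rfl⟩
  exact Set.mem_biUnion hpn ⟨i, hi, rfl⟩

lemma setSize_step2Set_le {A : ℕ} (hM : M.Finite) (hBS : ∀ C ∈ M, C.BS)
    (hA : ∀ C ∈ M, ∀ a ∈ C.atoms, a.args.length ≤ A) :
    setSize (step2Set domP M) ≤ (3 + A) * setSize M := by
  rw [step2Set_eq_biUnion]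
  refine setSize_biUnion_le_mul hM (fun C _ => List.finite_toSet _) fun C hC => ?_
  calc setSize {D | D ∈ abstractionClauses domP C}
      ≤ (abstractionClauses domP C).length * (3 + A) :=
        setSize_setOf_mem_le _ fun D hD => size_le_of_mem_abstractionClauses (hBS C hC) (hA C hC) hD
    _ ≤ C.size * (3 + A) := Nat.mul_le_mul_right _ (length_abstractionClauses_le C)
    _ = (3 + A) * C.size := mul_comm _ _

variable [DecidableEq P] [DecidableEq F] {σ : Sig P F} {c : F}

theorem rr_finite (hσ : ∀ fn ∈ σ.funcs, fn.2 = 0) (hσP : σ.preds.Finite) (hM : M.Finite) :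
    (rr σ domP c M).Finite := by
  rw [rr_eq_of_BS hσ]
  exact ((hM.union (Set.finite_singleton _)).union (step2Set_finite hM)).image _
    |>.union (step4Set_finite hσP)

theorem setSize_rr_le {A : ℕ} (hσ : ∀ fn ∈ σ.funcs, fn.2 = 0) (hσP : σ.preds.Finite)
    (hM : M.Finite) (hBS : ∀ C ∈ M, C.BS) (hA : ∀ C ∈ M, ∀ a ∈ C.atoms, a.args.length ≤ A) :
    setSize (rr σ domP c M) ≤
      (12 + 3 * A) * setSize M + (setSize (step4Set domP σ.preds : Set (Clause P F)) + 6) := by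
  set S := M ∪ {domcClause domP c} ∪ step2Set domP M
  have hSfin : S.Finite := (hM.union (Set.finite_singleton _)).union (step2Set_finite hM)
  have hdomc : setSize {domcClause domP c} = 2 := by
    simp [setSize_singleton, domcClause, Clause.size_eq, cTerm]
  have hS : setSize S ≤ setSize M + 2 + (3 + A) * setSize M :=
    calc setSize S ≤ setSize (M ∪ {domcClause domP c}) + setSize (step2Set domP M) :=
          setSize_union_le (hM.union (Set.finite_singleton _)) (step2Set_finite hM)
      _ ≤ setSize M + setSize {domcClause domP c} + (3 + A) * setSize M :=
          add_le_add (setSize_union_le hM (Set.finite_singleton _))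
            (setSize_step2Set_le hM hBS hA)
      _ = _ := by rw [hdomc]
  rw [rr_eq_of_BS hσ]
  calc _ ≤ setSize (rangeRestrictClause domP '' S) + setSize (step4Set domP σ.preds) :=
        setSize_union_le (hSfin.image _) (step4Set_finite hσP)
    _ ≤ 3 * setSize S + setSize (step4Set domP σ.preds : Set (Clause P F)) := by
        gcongr
        exact setSize_image_le_mul hSfin fun C _ => size_rangeRestrictClause_le domP C
    _ ≤ 3 * (setSize M + 2 + (3 + A) * setSize M)
        + setSize (step4Set domP σ.preds : Set (Clause P F)) := by gcongr
    _ = _ := by ring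

end Size

theorem rr_BS_general {P F : Type} [DecidableEq P] [DecidableEq F]
    (σ : Sig P F) (domP : P) (c : F) (eqP : P)
    (hσBS : ∀ fn ∈ σ.funcs, fn.2 = 0)
    (hσPfin : σ.preds.Finite)
    (hdomFresh : ∀ n, (domP, n) ∉ σ.preds) :
    ∃ a b : ℕ, ∀ M : Set (Clause P F), M.Finite → WFSet σ M →
      (∀ C ∈ M, ∀ at_ ∈ Clause.atoms C, at_.pred ≠ eqP) →
      RangeRestrictedSet (rr σ domP c M) ∧
      (∀ C ∈ rr σ domP c M, Clause.BS C) ∧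
      (Satisfiable M ↔ Satisfiable (rr σ domP c M)) ∧
      (rr σ domP c M).Finite ∧
      setSize (rr σ domP c M) ≤ a * setSize M + b := by
  obtain ⟨A, hA⟩ := (hσPfin.image Prod.snd).bddAbove
  refine ⟨12 + 3 * A, setSize (step4Set domP σ.preds : Set (Clause P F)) + 6,
    fun M hM hWF _ => ?_⟩
  have hBS := hWF.BS hσBS
  have hfresh : ∀ C ∈ M, ∀ a ∈ C.body, a.pred ≠ domP := fun C hC a ha hdom =>
    hdomFresh _ (hdom ▸ hWF.mem_preds hC (List.mem_append_right _ ha))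
  have harity : ∀ C ∈ M, ∀ a ∈ C.atoms, a.args.length ≤ A := fun C hC a ha =>
    hA ⟨_, hWF.mem_preds hC ha, rfl⟩
  exact ⟨rangeRestrictedSet_rr, BS_of_mem_rr hσBS hBS,
    ⟨satisfiable_rr_of_satisfiable hfresh, satisfiable_of_satisfiable_rr hWF hσBS⟩,
    rr_finite hσBS hσPfin hM, setSize_rr_le hσBS hσPfin hM hBS harity⟩

/-- **Satisfiability-equivalence preserving reduction of BS clauses to range-restricted BS
clauses** (part of Theorem 3): if `M` is a set of BS clauses (without equality, over a
finite signature all of whose function symbols are constants), then `rr(M)` is a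
range-restricted set of BS clauses, `M` is satisfiable if and only if `rr(M)` is
satisfiable, and the size of `rr(M)` is bounded by a linear function in the size of `M`. -/
theorem rr_BS {P F : Type} [DecidableEq P] [DecidableEq F]
    (σ : Sig P F) (domP : P) (c : F) (eqP : P)
    (hσBS : ∀ fn ∈ σ.funcs, fn.2 = 0)
    (hσPfin : σ.preds.Finite) (hσFfin : σ.funcs.Finite)
    (hdomFresh : ∀ n, (domP, n) ∉ σ.preds) :
    ∃ a b : ℕ, ∀ M : Set (Clause P F), M.Finite → WFSet σ M →
      (∀ C ∈ M, ∀ at_ ∈ Clause.atoms C, at_.pred ≠ eqP) →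
      RangeRestrictedSet (rr σ domP c M) ∧
      (∀ C ∈ rr σ domP c M, Clause.BS C) ∧
      (Satisfiable M ↔ Satisfiable (rr σ domP c M)) ∧
      (rr σ domP c M).Finite ∧
      setSize (rr σ domP c M) ≤ a * setSize M + b :=
  rr_BS_general σ domP c eqP hσBS hσPfin hdomFresh

end BUMG
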